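/- Let L be a countable relational language and let 𝒯 be a set of complete satisfiable L-theories with pairwise disjoint languages, each of which is either finitely categorical or ℵ₀-categorical. Then every theory in Cl_E(𝒯) is again finitely categorical or ℵ₀-categorical; moreover Cl_E(𝒯) ⊆ 𝒯 ∪ {T⁰_n : n ∈ ω∖{0}} ∪ {T⁰_∞}. -/
import Mathlib


open FirstOrder FirstOrder.Language

universe u v

variable {L : FirstOrder.Language.{u, v}}

/-- The `E`-closure of a family of complete theories: `𝒯` together with all complete
satisfiable theories `T` such that for every sentence `φ ∈ T` the set `𝒯_φ` is infinite
(Proposition 1.1 of the paper, taken as the definition). -/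
def ClE (𝒯 : Set (L.Theory)) : Set (L.Theory) :=
  𝒯 ∪ {T | T.IsMaximal ∧ ∀ φ ∈ T, {S ∈ 𝒯 | φ ∈ S}.Infinite}

/-- `T` has a model with exactly `n` elements. -/
def HasModelCard (T : L.Theory) (n : ℕ) : Prop :=
  ∃ (M : Type (max u v)) (S : L.Structure M), Nonempty M ∧ Nat.card M = n ∧
    @FirstOrder.Language.Theory.Model L M S T

/-- `T` has a finite model, i.e. `T` is finitely categorical. -/
def HasFiniteModel (T : L.Theory) : Prop :=
  ∃ n : ℕ, 0 < n ∧ HasModelCard T n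

/-- `T` has an infinite model. -/
def HasInfiniteModel (T : L.Theory) : Prop :=
  ∃ (M : Type (max u v)) (S : L.Structure M), Infinite M ∧
    @FirstOrder.Language.Theory.Model L M S T

/-- `T` is ℵ₀-categorical: it has a countably infinite model and all its countably infinite
models are isomorphic (so it has exactly one model of cardinality ℵ₀ up to isomorphism). -/
def Aleph0Categorical (T : L.Theory) : Prop :=
  (∃ (M : Type (max u v)) (S : L.Structure M), Countable M ∧ Infinite M ∧
      @FirstOrder.Language.Theory.Model L M S T) ∧
  ∀ (M N : Type (max u v)) (SM : L.Structure M) (SN : L.Structure N),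
    @FirstOrder.Language.Theory.Model L M SM T → @FirstOrder.Language.Theory.Model L N SN T →
    Countable M → Infinite M → Countable N → Infinite N →
      Nonempty (@FirstOrder.Language.Equiv L M N SM SN)

/-- The structure on `M` (over a relational language) interpreting every relation as empty. -/
def trivialStructure (L : FirstOrder.Language.{u, v}) [L.IsRelational] (M : Type*) :
    L.Structure M where
  funMap := fun f _ => isEmptyElim f
  RelMap := fun _ _ => False

/-- `T⁰_n`: the complete theory of an `n`-element structure with all relations empty. -/
noncomputable def T0fin (L : FirstOrder.Language.{u, v}) [L.IsRelational] (n : ℕ) : L.Theory :=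
  @FirstOrder.Language.completeTheory L (Fin n) (trivialStructure L (Fin n))

/-- `T⁰_∞`: the complete theory of an infinite structure with all relations empty. -/
noncomputable def T0inf (L : FirstOrder.Language.{u, v}) [L.IsRelational] : L.Theory :=
  @FirstOrder.Language.completeTheory L ℕ (trivialStructure L ℕ)

/-- The sentence `∃ x̄, R x̄` asserting nonemptiness of the relation `R`. -/
def relNonemptySentence {n : ℕ} (R : L.Relations n) : L.Sentence :=
  (FirstOrder.Language.Relations.boundedFormula (α := Empty) (l := n) R
    fun i => FirstOrder.Language.Term.var (Sum.inr i)).exs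

/-- The theories in `𝒯` have pairwise disjoint languages: no relation symbol is asserted
nonempty by two distinct theories of `𝒯`. -/
def PairwiseDisjointLanguages (𝒯 : Set (L.Theory)) : Prop :=
  ∀ T ∈ 𝒯, ∀ T' ∈ 𝒯, T ≠ T' → ∀ (n : ℕ) (R : L.Relations n),
    ¬(relNonemptySentence R ∈ T ∧ relNonemptySentence R ∈ T')


section Aux

open Cardinal

variable {L : FirstOrder.Language.{u, v}}

lemma realize_relNonemptySentence {M : Type*} [L.Structure M] {n : ℕ} (R : L.Relations n) :
    M ⊨ relNonemptySentence R ↔ ∃ x : Fin n → M, Structure.RelMap R x := by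
  simp [relNonemptySentence, Sentence.Realize, BoundedFormula.realize_exs,
    BoundedFormula.realize_rel, Term.realize]

/-- Any bijection between structures with empty relations is an `L`-isomorphism. -/
noncomputable def trivEquiv [L.IsRelational] {M : Type*} {N : Type*}
    [SM : L.Structure M] [SN : L.Structure N]
    (hM : ∀ (n : ℕ) (r : L.Relations n) (x : Fin n → M), ¬Structure.RelMap r x)
    (hN : ∀ (n : ℕ) (r : L.Relations n) (x : Fin n → N), ¬Structure.RelMap r x)
    (e : M ≃ N) : M ≃[L] N where
  toEquiv := e
  map_fun' := fun {_} f _ => isEmptyElim f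
  map_rel' := fun {_} r x => iff_of_false (hN _ r _) (hM _ r _)

lemma ct_eq_of_triv [L.IsRelational] {M : Type*} {N : Type*}
    (SM : L.Structure M) (SN : L.Structure N)
    (hM : ∀ (n : ℕ) (r : L.Relations n) (x : Fin n → M), ¬SM.RelMap r x)
    (hN : ∀ (n : ℕ) (r : L.Relations n) (x : Fin n → N), ¬SN.RelMap r x)
    (e : M ≃ N) : @FirstOrder.Language.completeTheory L M SM
      = @FirstOrder.Language.completeTheory L N SN := by
  letI := SM; letI := SN
  exact (StrongHomClass.elementarilyEquivalent (trivEquiv hM hN e)).completeTheory_eq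

lemma trivialStructure_relMap_empty [L.IsRelational] (M : Type*) :
    ∀ (n : ℕ) (r : L.Relations n) (x : Fin n → M), ¬(trivialStructure L M).RelMap r x :=
  fun _ _ _ h => h

lemma isMaximal_eq_completeTheory {T : L.Theory} (h : T.IsMaximal) {M : Type w}
    [L.Structure M] [Nonempty M] [M ⊨ T] : T = L.completeTheory M := by
  ext φ
  rw [mem_completeTheory]
  constructor
  · intro hφ; exact (Theory.models_sentence_of_mem hφ).realize_sentence M
  · intro hφ
    rcases h.mem_or_not_mem φ with h1 | h1
    · exact h1
    · exact absurd hφ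
        ((Sentence.realize_not M).1 ((Theory.models_sentence_of_mem h1).realize_sentence M))

/-- An infinite structure with empty relations over a countable relational language has
complete theory `T⁰_∞`. -/
lemma ct_eq_T0inf [L.IsRelational] (hcount : Countable (Σ n, L.Relations n))
    {M : Type (max u v)} [SM : L.Structure M] [Infinite M]
    (hM : ∀ (n : ℕ) (r : L.Relations n) (x : Fin n → M), ¬Structure.RelMap r x) :
    L.completeTheory M = T0inf L := by
  have hsym : Countable L.Symbols := by
    haveI := hcount
    infer_instance
  have hcard : L.card ≤ ℵ₀ := Cardinal.mk_le_aleph0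
  obtain ⟨S, -, hS⟩ := exists_elementarySubstructure_card_eq L (∅ : Set M)
    (ℵ₀ : Cardinal.{max u v}) le_rfl (by simp) (by simpa using hcard)
    (by simpa using Cardinal.aleph0_le_mk M)
  rw [Cardinal.lift_inj] at hS
  have hSN : Nonempty (S ≃ ℕ) := Cardinal.lift_mk_eq'.1 (by simp [hS])
  obtain ⟨e⟩ := hSN
  have hSrel : ∀ (n : ℕ) (r : L.Relations n) (x : Fin n → S), ¬Structure.RelMap r x :=
    fun n r x h => hM n r _ h
  have h1 : L.completeTheory M = L.completeTheory S :=
    S.elementarilyEquivalent.symm.completeTheory_eq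
  exact h1.trans (ct_eq_of_triv _ _ hSrel (trivialStructure_relMap_empty ℕ) e)

lemma not_rel_mem_T0inf [L.IsRelational] {n : ℕ} (R : L.Relations n) :
    (relNonemptySentence R).not ∈ T0inf L := by
  letI := trivialStructure L ℕ
  have h : T0inf L = L.completeTheory ℕ := rfl
  rw [h, mem_completeTheory, Sentence.realize_not]
  intro hcon
  exact ((realize_relNonemptySentence R).1 hcon).choose_spec

end Aux

/-- Corollary 2.8: for a class `𝒯` of finitely categorical or ℵ₀-categorical complete theories
with pairwise disjoint languages (in a countable relational language), every theory of
`Cl_E(𝒯)` is again finitely categorical or ℵ₀-categorical; moreover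
`Cl_E(𝒯) ⊆ 𝒯 ∪ {T⁰_n : n ≥ 1} ∪ {T⁰_∞}`. -/
theorem cor_2_8 (L : FirstOrder.Language.{u, v}) [L.IsRelational]
    (hcount : Countable (Σ n, L.Relations n))
    (𝒯 : Set (L.Theory)) (hmax : ∀ T ∈ 𝒯, T.IsMaximal)
    (hcat : ∀ T ∈ 𝒯, HasFiniteModel T ∨ Aleph0Categorical T)
    (hdisj : PairwiseDisjointLanguages 𝒯) :
    (∀ T ∈ ClE 𝒯, HasFiniteModel T ∨ Aleph0Categorical T) ∧
    ClE 𝒯 ⊆ 𝒯 ∪ {S | ∃ n : ℕ, 0 < n ∧ S = T0fin L n} ∪ {T0inf L} := by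
  classical
  -- Step 1: a theory in the closure but outside 𝒯 is a trivial theory.
  have key : ∀ T ∈ ClE 𝒯, T ∉ 𝒯 →
      (∃ n : ℕ, 0 < n ∧ T = T0fin L n) ∨ T = T0inf L := by
    intro T hT hT𝒯
    rcases hT with hT | hT
    · exact absurd hT hT𝒯
    obtain ⟨hTmax, hinf⟩ := hT
    have hno : ∀ (n : ℕ) (R : L.Relations n), relNonemptySentence R ∉ T := by
      intro n R hmem
      obtain ⟨S₁, h₁, S₂, h₂, hne⟩ := (hinf _ hmem).nontrivial
      exact hdisj S₁ h₁.1 S₂ h₂.1 hne n R ⟨h₁.2, h₂.2⟩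
    have hnot : ∀ (n : ℕ) (R : L.Relations n), (relNonemptySentence R).not ∈ T :=
      fun n R => (hTmax.mem_or_not_mem _).resolve_left (hno n R)
    let M : T.ModelType := hTmax.1.some
    have hMrel : ∀ (n : ℕ) (r : L.Relations n) (x : Fin n → M), ¬Structure.RelMap r x := by
      intro n r x h
      have hr := (Theory.models_sentence_of_mem (hnot n r)).realize_sentence M
      rw [Sentence.realize_not] at hr
      exact hr ((realize_relNonemptySentence r).2 ⟨x, h⟩)
    have hTM : T = L.completeTheory M := isMaximal_eq_completeTheory hTmax
    cases finite_or_infinite M with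
    | inl hfin =>
      left
      haveI := hfin
      refine ⟨Nat.card M, Nat.card_pos, ?_⟩
      exact hTM.trans (ct_eq_of_triv _ _ hMrel (trivialStructure_relMap_empty _)
        (Finite.equivFinOfCardEq rfl))
    | inr hinfM =>
      right
      haveI := hinfM
      exact hTM.trans (ct_eq_T0inf hcount hMrel)
  have hT0fin_cat : ∀ n : ℕ, 0 < n → HasFiniteModel (T0fin L n) := by
    intro n hn
    letI SU := trivialStructure L (ULift.{max u v} (Fin n))
    refine ⟨n, hn, ULift.{max u v} (Fin n), SU, ⟨⟨⟨0, hn⟩⟩⟩, ?_, ?_⟩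
    · rw [Nat.card_ulift, Nat.card_eq_fintype_card, Fintype.card_fin]
    · have h : T0fin L n = L.completeTheory (ULift.{max u v} (Fin n)) :=
        ct_eq_of_triv _ _ (trivialStructure_relMap_empty _) (trivialStructure_relMap_empty _)
          Equiv.ulift.symm
      rw [h]
      exact Language.model_completeTheory
  have hT0inf_cat : Aleph0Categorical (T0inf L) := by
    constructor
    · letI SU := trivialStructure L (ULift.{max u v} ℕ)
      refine ⟨ULift.{max u v} ℕ, SU, inferInstance, inferInstance, ?_⟩
      have h : T0inf L = L.completeTheory (ULift.{max u v} ℕ) :=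
        ct_eq_of_triv _ _ (trivialStructure_relMap_empty _) (trivialStructure_relMap_empty _)
          Equiv.ulift.symm
      rw [h]
      exact Language.model_completeTheory
    · intro M N SM SN hMmod hNmod hMc hMi hNc hNi
      letI := SM; letI := SN; haveI := hMmod; haveI := hNmod
      haveI := hMc; haveI := hMi; haveI := hNc; haveI := hNi
      have hMrel : ∀ (n : ℕ) (r : L.Relations n) (x : Fin n → M), ¬Structure.RelMap r x := by
        intro n r x h
        have hr := (Theory.models_sentence_of_mem (not_rel_mem_T0inf r)).realize_sentence M
        rw [Sentence.realize_not] at hr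
        exact hr ((realize_relNonemptySentence r).2 ⟨x, h⟩)
      have hNrel : ∀ (n : ℕ) (r : L.Relations n) (x : Fin n → N), ¬Structure.RelMap r x := by
        intro n r x h
        have hr := (Theory.models_sentence_of_mem (not_rel_mem_T0inf r)).realize_sentence N
        rw [Sentence.realize_not] at hr
        exact hr ((realize_relNonemptySentence r).2 ⟨x, h⟩)
      obtain ⟨e⟩ := Cardinal.eq.1 ((Cardinal.mk_eq_aleph0 M).trans (Cardinal.mk_eq_aleph0 N).symm)
      exact ⟨trivEquiv hMrel hNrel e⟩
  constructor
  · intro T hT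
    by_cases hT𝒯 : T ∈ 𝒯
    · exact hcat T hT𝒯
    · rcases key T hT hT𝒯 with ⟨n, hn, rfl⟩ | rfl
      · exact Or.inl (hT0fin_cat n hn)
      · exact Or.inr hT0inf_cat
  · intro T hT
    by_cases hT𝒯 : T ∈ 𝒯
    · exact Or.inl (Or.inl hT𝒯)
    · rcases key T hT hT𝒯 with ⟨n, hn, hTeq⟩ | hTeq
      · exact Or.inl (Or.inr ⟨n, hn, hTeq⟩)
      · exact Or.inr hTeq
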